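/- For all integers n ≥ 1, ⌊⌊nφ⌋·φ⌋ = ⌊nφ⌋ + n − 1 and ⌊⌊nφ²⌋·φ⌋ = 2⌊nφ⌋ + n. -/

import Mathlib

/-!
Write `a = ⌊nφ⌋` and `θ = fract (nφ)`, which lies strictly between `0` and `1` because `nφ` is
irrational. From `φ² = φ + 1` one gets `aφ = a + n - θ(φ - 1)` and `⌊nφ²⌋ = a + n`, hence
`(a + n)φ = 2a + n + θ(2 - φ)`; since `0 < φ - 1, 2 - φ < 1`, both error terms lie in `(0, 1)`.
-/

noncomputable def phi : ℝ := (1 + Real.sqrt 5) / 2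

open Real goldenRatio

lemma phi_eq_goldenRatio : phi = φ := rfl

namespace Real

lemma fract_intCast_mul_goldenRatio_pos {n : ℤ} (hn : n ≠ 0) : 0 < Int.fract (n * φ) :=
  Int.fract_pos.2 ((goldenRatio_irrational.intCast_mul hn).ne_int _)

lemma floor_intCast_mul_goldenRatio_mul_goldenRatio (n : ℤ) :
    (⌊n * φ⌋ : ℝ) * φ = ⌊n * φ⌋ + n - Int.fract (n * φ) * (φ - 1) := by
  rw [← Int.self_sub_fract]
  linear_combination (n : ℝ) * goldenRatio_sq

lemma floor_intCast_mul_goldenRatio_sq (n : ℤ) : ⌊n * φ ^ 2⌋ = ⌊n * φ⌋ + n := by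
  rw [goldenRatio_sq, mul_add, mul_one, Int.floor_add_intCast]

theorem floor_floor_mul_goldenRatio_mul_goldenRatio {n : ℤ} (hn : n ≠ 0) :
    ⌊(⌊n * φ⌋ : ℝ) * φ⌋ = ⌊n * φ⌋ + n - 1 := by
  have hθ₀ := fract_intCast_mul_goldenRatio_pos hn
  have hθ₁ := Int.fract_lt_one (n * φ)
  rw [Int.floor_eq_iff, floor_intCast_mul_goldenRatio_mul_goldenRatio]
  push_cast
  constructor <;> nlinarith [one_lt_goldenRatio, goldenRatio_lt_two]

theorem floor_floor_mul_goldenRatio_sq_mul_goldenRatio {n : ℤ} (hn : n ≠ 0) :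
    ⌊(⌊n * φ ^ 2⌋ : ℝ) * φ⌋ = 2 * ⌊n * φ⌋ + n := by
  have hθ₀ := fract_intCast_mul_goldenRatio_pos hn
  have hθ₁ := Int.fract_lt_one (n * φ)
  have key : (⌊n * φ ^ 2⌋ : ℝ) * φ = 2 * ⌊n * φ⌋ + n + Int.fract (n * φ) * (2 - φ) := by
    rw [floor_intCast_mul_goldenRatio_sq, Int.cast_add]
    linear_combination floor_intCast_mul_goldenRatio_mul_goldenRatio n -
      Int.floor_add_fract ((n : ℝ) * φ)
  rw [Int.floor_eq_iff, key]
  push_cast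
  constructor <;> nlinarith [one_lt_goldenRatio, goldenRatio_lt_two]

end Real

theorem floor_wythoff_compositions (n : ℕ) (hn : 1 ≤ n) :
    ⌊((⌊(n : ℝ) * phi⌋ : ℤ) : ℝ) * phi⌋ = ⌊(n : ℝ) * phi⌋ + (n : ℤ) - 1 ∧
    ⌊((⌊(n : ℝ) * phi ^ 2⌋ : ℤ) : ℝ) * phi⌋ = 2 * ⌊(n : ℝ) * phi⌋ + (n : ℤ) := by
  have hn₀ : (n : ℤ) ≠ 0 := by omega
  simpa only [phi_eq_goldenRatio, Int.cast_natCast] using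
    And.intro (floor_floor_mul_goldenRatio_mul_goldenRatio hn₀)
      (floor_floor_mul_goldenRatio_sq_mul_goldenRatio hn₀)
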